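/- arXiv:2206.12169 — 2 statements merged into one kernel-verified Lean document; each statement's English description precedes it below -/
import Mathlib

section
/- Let f(α, x) be such that x ↦ f(α, x) is μ-strongly concave on a convex set 𝒳 for each α, and ∇ₓf satisfies ‖∇ₓf(α₁, x) − ∇ₓf(α₂, x)‖ ≤ L_{xα}‖α₁ − α₂‖ for all x ∈ 𝒳. Let x*(α) = argmax_{x ∈ 𝒳} f(α, x). Then the map α ↦ x*(α) is (L_{xα}/μ)-Lipschitz: ‖x*(α₁) − x*(α₂)‖ ≤ (L_{xα}/μ)‖α₁ − α₂‖. -/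
open RealInnerProductSpace

/-- Lipschitz continuity of the argmax of a strongly concave function. -/
theorem stmt_1 {E A : Type*} [NormedAddCommGroup E] [InnerProductSpace ℝ E]
    [NormedAddCommGroup A]
    (𝒳 : Set E) (hconv : Convex ℝ 𝒳) (μ Lxα : ℝ) (hμ : 0 < μ)
    (f : A → E → ℝ) (gx : A → E → E)
    (hsc : ∀ α, ∀ x1 ∈ 𝒳, ∀ x2 ∈ 𝒳,
      f α x1 ≤ f α x2 + ⟪gx α x2, x1 - x2⟫ - μ / 2 * ‖x1 - x2‖ ^ 2)
    (hLip : ∀ x ∈ 𝒳, ∀ α1 α2 : A, ‖gx α1 x - gx α2 x‖ ≤ Lxα * ‖α1 - α2‖)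
    (xstar : A → E) (hmem : ∀ α, xstar α ∈ 𝒳)
    (hopt : ∀ α, ∀ x ∈ 𝒳, ⟪gx α (xstar α), x - xstar α⟫ ≤ 0)
    (hargmax : ∀ α, ∀ x ∈ 𝒳, f α x ≤ f α (xstar α)) :
    ∀ α1 α2 : A, ‖xstar α1 - xstar α2‖ ≤ (Lxα / μ) * ‖α1 - α2‖ := by
  intro α1 α2
  set x1 := xstar α1 with hx1
  set x2 := xstar α2 with hx2
  have h1 := hsc α1 x1 (hmem α1) x2 (hmem α2)
  have h2 := hsc α1 x2 (hmem α2) x1 (hmem α1)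
  have ho1 : ⟪gx α1 x1, x2 - x1⟫ ≤ 0 := hopt α1 x2 (hmem α2)
  have ho2 : ⟪gx α2 x2, x1 - x2⟫ ≤ 0 := hopt α2 x1 (hmem α1)
  have hnsym : ‖x2 - x1‖ = ‖x1 - x2‖ := by rw [norm_sub_rev]
  have key : μ * ‖x1 - x2‖ ^ 2 ≤ ⟪gx α1 x2 - gx α2 x2, x1 - x2⟫ := by
    rw [inner_sub_left]
    rw [hnsym] at h2
    linarith
  have hCS : ⟪gx α1 x2 - gx α2 x2, x1 - x2⟫ ≤ ‖gx α1 x2 - gx α2 x2‖ * ‖x1 - x2‖ :=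
    real_inner_le_norm _ _
  have hL : ‖gx α1 x2 - gx α2 x2‖ ≤ Lxα * ‖α1 - α2‖ := hLip x2 (hmem α2) α1 α2
  have hRHS : (0:ℝ) ≤ Lxα * ‖α1 - α2‖ := le_trans (norm_nonneg _) hL
  have hn : μ * ‖x1 - x2‖ ^ 2 ≤ (Lxα * ‖α1 - α2‖) * ‖x1 - x2‖ := by
    calc μ * ‖x1 - x2‖ ^ 2 ≤ ‖gx α1 x2 - gx α2 x2‖ * ‖x1 - x2‖ := le_trans key hCS
    _ ≤ (Lxα * ‖α1 - α2‖) * ‖x1 - x2‖ :=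
        mul_le_mul_of_nonneg_right hL (norm_nonneg _)
  rcases eq_or_lt_of_le (norm_nonneg (x1 - x2)) with h0 | h0
  · rw [← h0, div_mul_eq_mul_div]
    exact div_nonneg hRHS hμ.le
  · rw [div_mul_eq_mul_div, le_div_iff₀ hμ]
    nlinarith [hn, h0]
end

section
/- (Sion/von Neumann minimax.) Let X ⊂ ℝⁿ, Y ⊂ ℝᵐ be compact convex sets and f : X × Y → ℝ continuous, with x ↦ f(x, y) concave for each fixed y and y ↦ f(x, y) convex for each fixed x. Then max_{x∈X} min_{y∈Y} f(x, y) = min_{y∈Y} max_{x∈X} f(x, y). -/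
/-! Sion's minimax theorem (`Sion.exists_isSaddlePointOn`, applied with the roles of the two
variables exchanged) yields a saddle point `(a, b)`: `f x b ≤ f a b ≤ f a y` on `X × Y`. At a
saddle point the inner extrema are attained at `b` and at `a`, and both sides equal `f a b`. -/

open Set

section SaddlePoint

variable {E F β : Type*} [ConditionallyCompleteLinearOrder β]
  {X : Set E} {Y : Set F} {f : E → F → β} {a : E} {b : F}

theorem sSup_image_sInf_eq_of_isSaddlePointOn (ha : a ∈ X) (hb : b ∈ Y)
    (h : IsSaddlePointOn Y X (flip f) b a) (hbdd : ∀ x ∈ X, BddBelow ((fun y => f x y) '' Y)) :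
    sSup ((fun x => sInf ((fun y => f x y) '' Y)) '' X) = f a b := by
  have hinf_a : sInf ((fun y => f a y) '' Y) = f a b :=
    IsLeast.csInf_eq ⟨mem_image_of_mem _ hb, forall_mem_image.2 fun y hy => h y hy a ha⟩
  refine IsGreatest.csSup_eq ⟨⟨a, ha, hinf_a⟩, forall_mem_image.2 fun x hx => ?_⟩
  calc sInf ((fun y => f x y) '' Y) ≤ f x b :=
        csInf_le (hbdd x hx) (mem_image_of_mem _ hb)
    _ ≤ f a b := h b hb x hx

theorem sInf_image_sSup_eq_of_isSaddlePointOn (ha : a ∈ X) (hb : b ∈ Y)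
    (h : IsSaddlePointOn Y X (flip f) b a) (hbdd : ∀ y ∈ Y, BddAbove ((fun x => f x y) '' X)) :
    sInf ((fun y => sSup ((fun x => f x y) '' X)) '' Y) = f a b := by
  have hsup_b : sSup ((fun x => f x b) '' X) = f a b :=
    IsGreatest.csSup_eq ⟨mem_image_of_mem _ ha, forall_mem_image.2 fun x hx => h b hb x hx⟩
  refine IsLeast.csInf_eq ⟨⟨b, hb, hsup_b⟩, forall_mem_image.2 fun y hy => ?_⟩
  calc f a b ≤ f a y := h y hy a ha
    _ ≤ sSup ((fun x => f x y) '' X) :=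
        le_csSup (hbdd y hy) (mem_image_of_mem _ ha)

end SaddlePoint

/-- Sion/von Neumann minimax theorem on compact convex subsets of
Euclidean spaces. -/
theorem stmt_16 {n m : ℕ} (X : Set (EuclideanSpace ℝ (Fin n)))
    (Y : Set (EuclideanSpace ℝ (Fin m)))
    (hXc : IsCompact X) (hXconv : Convex ℝ X) (hXne : X.Nonempty)
    (hYc : IsCompact Y) (hYconv : Convex ℝ Y) (hYne : Y.Nonempty)
    (f : EuclideanSpace ℝ (Fin n) → EuclideanSpace ℝ (Fin m) → ℝ)
    (hcont : ContinuousOn (fun p : EuclideanSpace ℝ (Fin n) × EuclideanSpace ℝ (Fin m) =>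
      f p.1 p.2) (X ×ˢ Y))
    (hconc : ∀ y ∈ Y, ConcaveOn ℝ X (fun x => f x y))
    (hconv : ∀ x ∈ X, ConvexOn ℝ Y (fun y => f x y)) :
    sSup ((fun x => sInf ((fun y => f x y) '' Y)) '' X)
      = sInf ((fun y => sSup ((fun x => f x y) '' X)) '' Y) := by
  have hcont_y : ∀ x ∈ X, ContinuousOn (fun y => f x y) Y := fun x hx =>
    hcont.uncurry_left x hx
  have hcont_x : ∀ y ∈ Y, ContinuousOn (fun x => f x y) X := fun y hy =>
    hcont.uncurry_right y hy
  obtain ⟨b, hb, a, ha, hsaddle⟩ := Sion.exists_isSaddlePointOn (f := flip f)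
    hYne hYconv hYc (fun x hx => (hcont_y x hx).lowerSemicontinuousOn)
    (fun x hx => (hconv x hx).quasiconvexOn)
    hXconv hXne hXc (fun y hy => (hcont_x y hy).upperSemicontinuousOn)
    (fun y hy => (hconc y hy).quasiconcaveOn)
  rw [sSup_image_sInf_eq_of_isSaddlePointOn ha hb hsaddle
      fun x hx => hYc.bddBelow_image (hcont_y x hx),
    sInf_image_sSup_eq_of_isSaddlePointOn ha hb hsaddle
      fun y hy => hXc.bddAbove_image (hcont_x y hy)]
end
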